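/- arXiv:2410.15910 — 2 statements merged into one kernel-verified Lean document; each statement's English description precedes it below -/
import Mathlib

section
/- Donsker–Varadhan lower bound: For any joint pmf p on a finite product X × Y with marginals p_X and p_Y, and any function T : X × Y → ℝ, the mutual information satisfies I(X;Y) ≥ ∑_{x,y} p(x,y) T(x,y) − log( ∑_{x,y} p_X(x) p_Y(y) e^{T(x,y)} ). -/
/-!
Donsker–Varadhan is Gibbs' inequality against the tilted weights `q e^T / Z`, with
`Z = ∑ q e^T`: the elementary bound `a - b ≤ a log (a / b)` for `a ≥ 0 < b`, summed over the
support of `p`, gives `∑ p T - log Z ≤ ∑ p log (p / q)`.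
-/

open Real Finset

lemma sub_le_mul_log_div {a b : ℝ} (ha : 0 ≤ a) (hb : 0 < b) : a - b ≤ a * log (a / b) := by
  have h := mul_le_mul_of_nonneg_left (self_sub_one_le_mul_log (div_nonneg ha hb.le)) hb.le
  calc a - b = b * (a / b - 1) := by field_simp
    _ ≤ b * (a / b * log (a / b)) := h
    _ = a * log (a / b) := by field_simp

lemma mul_sub_mul_log_le {p q Z : ℝ} (T : ℝ) (hp : 0 ≤ p) (hq : 0 ≤ q) (hpq : 0 < p → 0 < q)
    (hZ : 0 < Z) :
    p * T - p * log Z ≤ p * log (p / q) + q * exp T / Z - p := by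
  rcases hp.eq_or_lt with rfl | hp
  · simp only [zero_mul, zero_div, log_zero, sub_zero, zero_add]
    positivity
  have hq := hpq hp
  have hlog : log (p / (q * exp T / Z)) = log (p / q) - T + log Z := by
    rw [log_div hp.ne' (by positivity), log_div (by positivity) hZ.ne',
      log_mul hq.ne' (exp_pos T).ne', log_exp, log_div hp.ne' hq.ne']
    ring
  have gibbs := sub_le_mul_log_div hp.le (show 0 < q * exp T / Z by positivity)
  rw [hlog] at gibbs
  linarith

lemma donsker_varadhan_fintype {ι : Type*} [Fintype ι] (f g T : ι → ℝ)
    (hf0 : ∀ i, 0 ≤ f i) (hf1 : ∑ i, f i = 1) (hg0 : ∀ i, 0 ≤ g i)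
    (hfg : ∀ i, 0 < f i → 0 < g i) :
    ∑ i, f i * T i - log (∑ i, g i * exp (T i)) ≤ ∑ i, f i * log (f i / g i) := by
  set Z := ∑ i, g i * exp (T i) with hZ_def
  have hZ : 0 < Z := by
    obtain ⟨j, -, hj⟩ :=
      exists_lt_of_sum_lt (s := univ) (f := fun _ ↦ (0 : ℝ)) (g := f) (by simp [hf1])
    exact sum_pos' (fun i _ ↦ mul_nonneg (hg0 i) (exp_pos _).le)
      ⟨j, mem_univ j, mul_pos (hfg j hj) (exp_pos _)⟩
  have hsum := sum_le_sum fun i (_ : i ∈ univ) ↦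
    mul_sub_mul_log_le (T i) (hf0 i) (hg0 i) (hfg i) hZ
  rw [sum_sub_distrib, ← sum_mul, hf1, one_mul, sum_sub_distrib, sum_add_distrib, ← sum_div,
    ← hZ_def, div_self hZ.ne', hf1] at hsum
  linarith

/-- Donsker–Varadhan lower bound: for any joint pmf `p` on a finite product `X × Y` with
marginals `p_X`, `p_Y`, and any function `T : X × Y → ℝ`, the mutual information
`I(X;Y) = ∑ p(x,y) log (p(x,y)/(p_X(x)p_Y(y)))` satisfies
`I(X;Y) ≥ ∑ p(x,y) T(x,y) − log (∑ p_X(x) p_Y(y) e^{T(x,y)})`. -/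
theorem donsker_varadhan_lower_bound {X Y : Type*} [Fintype X] [Fintype Y]
    (p : X → Y → ℝ)
    (hp0 : ∀ x y, 0 ≤ p x y) (hp1 : ∑ x, ∑ y, p x y = 1)
    (T : X → Y → ℝ) :
    (∑ x, ∑ y, p x y * T x y)
        - Real.log (∑ x, ∑ y, (∑ y', p x y') * (∑ x', p x' y) * Real.exp (T x y))
      ≤ ∑ x, ∑ y, p x y * Real.log (p x y / ((∑ y', p x y') * (∑ x', p x' y))) := by
  have hmarg : ∀ z : X × Y, 0 < p z.1 z.2 → 0 < (∑ y', p z.1 y') * ∑ x', p x' z.2 :=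
    fun z hz ↦ mul_pos
      (hz.trans_le (single_le_sum (fun y _ ↦ hp0 z.1 y) (mem_univ z.2)))
      (hz.trans_le (single_le_sum (fun x _ ↦ hp0 x z.2) (mem_univ z.1)))
  have h := donsker_varadhan_fintype (fun z : X × Y ↦ p z.1 z.2)
    (fun z ↦ (∑ y', p z.1 y') * ∑ x', p x' z.2) (fun z ↦ T z.1 z.2)
    (fun z ↦ hp0 z.1 z.2) (by rwa [Fintype.sum_prod_type])
    (fun z ↦ mul_nonneg (sum_nonneg fun y _ ↦ hp0 z.1 y) (sum_nonneg fun x _ ↦ hp0 x z.2))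
    hmarg
  simpa only [Fintype.sum_prod_type] using h
end

section
/- The PMI-weighted BC population minimizer recovers the style-conditioned expert: for a joint pmf p on S × A × Z with p(s,z) := ∑_a p(s,a,z) and p(z) > 0, the loss L(π) = ∑_{s,a,z} p(s,a,z)·(p(z|s,a)/p(z))·(−log π(a|s,z)) is minimized over policies at π*(a|s,z) = p(s,a,z)·p(z|s,a) / ∑_{a'} p(s,a',z)·p(z|s,a'), for each (s,z) where the denominator is positive. -/
/-!
Fix `(s, z)`. With weights `c a = p(s,a,z) · p(z|s,a) / p(z)`, the loss restricted to the block
`(s, z)` is `∑ₐ c a · (-log π(a|s,z))`, and `π*(·|s,z)` is `c` normalised, because the factor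
`1 / p(z)` cancels. The theorem is then the weighted Gibbs inequality, block by block: from
`log x ≤ x - 1`, `∑ c a · log (q a / (c a / C)) ≤ C · ∑ q a - C ≤ 0` with `C = ∑ c`, for every
subprobability vector `q`.
-/

/-- Loss term with conventions: weight `0` contributes `0` (`0 · log 0 := 0`);
positive weight with `π = 0` contributes `+∞`. -/
noncomputable def negLogTerm (w q : ℝ) : EReal :=
  if w = 0 then 0 else if q = 0 then ⊤ else ((-(w * Real.log q) : ℝ) : EReal)

open Finset

lemma EReal.coe_sum {ι : Type*} (s : Finset ι) (f : ι → ℝ) :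
    ((∑ i ∈ s, f i : ℝ) : EReal) = ∑ i ∈ s, (f i : EReal) :=
  map_sum (⟨⟨Real.toEReal, EReal.coe_zero⟩, EReal.coe_add⟩ : ℝ →+ EReal) f s

open Real in
lemma Real.sum_mul_log_le_sum_mul_log_div_sum {ι : Type*} [Fintype ι] {c q : ι → ℝ}
    (hc : ∀ i, 0 ≤ c i) (hq0 : ∀ i, 0 ≤ q i) (hq1 : ∑ i, q i ≤ 1)
    (hq : ∀ i, c i ≠ 0 → q i ≠ 0) :
    ∑ i, c i * log (q i) ≤ ∑ i, c i * log (c i / ∑ j, c j) := by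
  set C := ∑ j, c j
  have hC : 0 ≤ C := sum_nonneg fun j _ => hc j
  have hterm : ∀ i, c i * log (q i) - c i * log (c i / C) ≤ C * q i - c i := by
    intro i
    rcases (hc i).eq_or_lt with hci | hci
    · rw [← hci]
      simpa using mul_nonneg hC (hq0 i)
    have hCpos : 0 < C := hci.trans_le (single_le_sum (fun j _ => hc j) (mem_univ i))
    have hqi : 0 < q i := (hq0 i).lt_of_ne (hq i hci.ne').symm
    calc c i * log (q i) - c i * log (c i / C) = c i * log (q i / (c i / C)) := by
          rw [log_div hqi.ne' (div_pos hci hCpos).ne']; ring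
      _ ≤ c i * (q i / (c i / C) - 1) :=
          mul_le_mul_of_nonneg_left (log_le_sub_one_of_pos (by positivity)) hci.le
      _ = C * q i - c i := by field_simp
  have hsum : ∑ i, (C * q i - c i) ≤ 0 := by
    rw [sum_sub_distrib, ← mul_sum, sub_nonpos]
    exact mul_le_of_le_one_right hC hq1
  rw [← sub_nonpos, ← sum_sub_distrib]
  exact (sum_le_sum fun i _ => hterm i).trans hsum

open Real in
lemma negLogTerm_eq_coe {w q : ℝ} (h : w ≠ 0 → q ≠ 0) :
    negLogTerm w q = ((-(w * log q) : ℝ) : EReal) := by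
  unfold negLogTerm
  split_ifs with hw hq
  · simp [hw]
  · exact absurd hq (h hw)
  · rfl

open Real in
lemma negLogTerm_nonneg {w q : ℝ} (hw : 0 ≤ w) (hq0 : 0 ≤ q) (hq1 : q ≤ 1) :
    0 ≤ negLogTerm w q := by
  unfold negLogTerm
  split_ifs
  · exact le_rfl
  · exact le_top
  · exact EReal.coe_nonneg.mpr (neg_nonneg.mpr (mul_nonpos_of_nonneg_of_nonpos hw
      (log_nonpos hq0 hq1)))

open Real in
/-- Weighted Gibbs inequality: the normalised weights minimise the weighted cross entropy among
subprobability vectors. -/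
lemma sum_negLogTerm_le_of_eq_div_sum {ι : Type*} [Fintype ι] {c q r : ι → ℝ}
    (hc : ∀ i, 0 ≤ c i) (hq0 : ∀ i, 0 ≤ q i) (hq1 : ∑ i, q i ≤ 1)
    (hr : ∀ i, c i ≠ 0 → r i = c i / ∑ j, c j) :
    ∑ i, negLogTerm (c i) (r i) ≤ ∑ i, negLogTerm (c i) (q i) := by
  by_cases hbad : ∃ i, c i ≠ 0 ∧ q i = 0
  · obtain ⟨i, hci, hqi⟩ := hbad
    have hq_le : ∀ j, q j ≤ 1 := fun j =>
      (single_le_sum (fun k _ => hq0 k) (mem_univ j)).trans hq1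
    calc _ ≤ (⊤ : EReal) := le_top
      _ = negLogTerm (c i) (q i) := by simp [negLogTerm, hci, hqi]
      _ ≤ _ := single_le_sum (fun j _ => negLogTerm_nonneg (hc j) (hq0 j) (hq_le j))
          (mem_univ i)
  push Not at hbad
  have hr_ne : ∀ i, c i ≠ 0 → r i ≠ 0 := by
    intro i hci
    have hCpos : 0 < ∑ j, c j :=
      sum_pos' (fun j _ => hc j) ⟨i, mem_univ i, (hc i).lt_of_ne (Ne.symm hci)⟩
    rw [hr i hci]
    exact div_ne_zero hci hCpos.ne'
  have hr_log : ∀ i, c i * log (r i) = c i * log (c i / ∑ j, c j) := by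
    intro i
    by_cases hci : c i = 0
    · simp [hci]
    · rw [hr i hci]
  simp only [negLogTerm_eq_coe (hr_ne _), negLogTerm_eq_coe (hbad _), ← EReal.coe_sum,
    EReal.coe_le_coe_iff, sum_neg_distrib, neg_le_neg_iff, hr_log]
  exact sum_mul_log_le_sum_mul_log_div_sum hc hq0 hq1 hbad

theorem bcpmi_population_minimizer_general {S A Z : Type*} [Fintype S] [Fintype A] [Fintype Z]
    (p : S → A → Z → ℝ)
    (hp0 : ∀ s a z, 0 ≤ p s a z)
    (π πstar : S → Z → A → ℝ)
    (hπ0 : ∀ s z a, 0 ≤ π s z a) (hπ1 : ∀ s z, ∑ a, π s z a = 1)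
    (hstar : ∀ s z, 0 < ∑ a', p s a' z * (p s a' z / ∑ z', p s a' z') →
      ∀ a, πstar s z a
        = p s a z * (p s a z / ∑ z', p s a z')
            / ∑ a', p s a' z * (p s a' z / ∑ z', p s a' z')) :
    ∑ s, ∑ a, ∑ z,
        negLogTerm
          (p s a z * ((p s a z / ∑ z', p s a z') / (∑ s', ∑ a', p s' a' z)))
          (πstar s z a)
      ≤ ∑ s, ∑ a, ∑ z,
          negLogTerm
            (p s a z * ((p s a z / ∑ z', p s a z') / (∑ s', ∑ a', p s' a' z)))
            (π s z a) := by
  have hweight : ∀ s a z, p s a z * ((p s a z / ∑ z', p s a z') / ∑ s', ∑ a', p s' a' z)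
      = p s a z * (p s a z / ∑ z', p s a z') / ∑ s', ∑ a', p s' a' z :=
    fun _ _ _ => (mul_div_assoc _ _ _).symm
  simp only [hweight]
  rw [sum_congr rfl fun s _ => sum_comm, sum_congr rfl fun s _ => sum_comm (γ := A)]
  refine sum_le_sum fun s _ => sum_le_sum fun z _ => ?_
  set n : A → ℝ := fun a => p s a z * (p s a z / ∑ z', p s a z')
  set pz := ∑ s', ∑ a', p s' a' z
  have hn : ∀ a, 0 ≤ n a := fun a =>
    mul_nonneg (hp0 s a z) (div_nonneg (hp0 s a z) (sum_nonneg fun z' _ => hp0 s a z'))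
  have hpz : 0 ≤ pz := sum_nonneg fun s' _ => sum_nonneg fun a' _ => hp0 s' a' z
  refine sum_negLogTerm_le_of_eq_div_sum (c := fun a => n a / pz)
    (fun a => div_nonneg (hn a) hpz) (hπ0 s z) (hπ1 s z).le fun a ha => ?_
  have hpz0 : pz ≠ 0 := fun h => ha (by simp [h])
  have hna : 0 < n a := (hn a).lt_of_ne fun h => ha (by simp [← h])
  rw [← sum_div, div_div_div_cancel_right₀ hpz0]
  exact hstar s z (sum_pos' (fun a' _ => hn a') ⟨a, mem_univ a, hna⟩) a

/-- The PMI-weighted BC population minimizer: for a joint pmf `p` on `S × A × Z` with all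
`p(z) > 0`, the loss `L(π) = ∑ p(s,a,z)·(p(z|s,a)/p(z))·(−log π(a|s,z))` is minimized over
policies at `π*(a|s,z) = p(s,a,z)·p(z|s,a) / ∑_{a'} p(s,a',z)·p(z|s,a')` for each `(s,z)`
where the denominator is positive. -/
theorem bcpmi_population_minimizer {S A Z : Type*} [Fintype S] [Fintype A] [Fintype Z]
    (p : S → A → Z → ℝ)
    (hp0 : ∀ s a z, 0 ≤ p s a z) (hp1 : ∑ s, ∑ a, ∑ z, p s a z = 1)
    (hZ : ∀ z, 0 < ∑ s', ∑ a', p s' a' z)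
    (π πstar : S → Z → A → ℝ)
    (hπ0 : ∀ s z a, 0 ≤ π s z a) (hπ1 : ∀ s z, ∑ a, π s z a = 1)
    (hπstar0 : ∀ s z a, 0 ≤ πstar s z a) (hπstar1 : ∀ s z, ∑ a, πstar s z a = 1)
    (hstar : ∀ s z, 0 < ∑ a', p s a' z * (p s a' z / ∑ z', p s a' z') →
      ∀ a, πstar s z a
        = p s a z * (p s a z / ∑ z', p s a z')
            / ∑ a', p s a' z * (p s a' z / ∑ z', p s a' z')) :
    ∑ s, ∑ a, ∑ z,
        negLogTerm
          (p s a z * ((p s a z / ∑ z', p s a z') / (∑ s', ∑ a', p s' a' z)))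
          (πstar s z a)
      ≤ ∑ s, ∑ a, ∑ z,
          negLogTerm
            (p s a z * ((p s a z / ∑ z', p s a z') / (∑ s', ∑ a', p s' a' z)))
            (π s z a) :=
  bcpmi_population_minimizer_general p hp0 π πstar hπ0 hπ1 hstar
end
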